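/- arXiv:2209.11022 — 3 statements merged into one kernel-verified Lean document; each statement's English description precedes it below -/
import Mathlib

section
/- There exists a 3-dimensional linear subspace W ⊆ ℂ⁶ containing e₀ on which F vanishes identically if and only if there exists a 2-dimensional linear subspace U contained in the hyperplane {x ∈ ℂ⁶ : x₀ = 0} on which both q and k vanish identically. (The cubic fourfold Y contains a plane passing through ν if and only if the surface Σ = Q ∩ K contains a line.) -/
open MvPolynomial

private lemma eval_agree {p : MvPolynomial (Fin 6) ℂ} (hp : ∀ m ∈ p.support, m 0 = 0)
    {w v : Fin 6 → ℂ} (h : ∀ i, i ≠ 0 → w i = v i) : eval w p = eval v p := by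
  rw [eval_eq', eval_eq']
  refine Finset.sum_congr rfl fun m hm => ?_
  congr 1
  refine Finset.prod_congr rfl fun i _ => ?_
  by_cases hi : i = 0
  · subst hi; rw [hp m hm]; simp
  · rw [h i hi]

private lemma e0_ne {i : Fin 6} (hi : i ≠ 0) : (![1, 0, 0, 0, 0, 0] : Fin 6 → ℂ) i = 0 := by
  fin_cases i <;> first | exact absurd rfl hi | rfl

/-- `Y` contains a plane through `ν` iff `Σ = Q ∩ K` contains a line:
there is a 3-dimensional subspace `W ∋ e₀` with `F|_W = 0` iff there is a 2-dimensional
subspace `U` of the hyperplane `{x₀ = 0}` with `q|_U = 0` and `k|_U = 0`. -/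
theorem stmt_2 (q k F : MvPolynomial (Fin 6) ℂ)
    (hq : q.IsHomogeneous 2) (hk : k.IsHomogeneous 3)
    (hq0 : ∀ m ∈ q.support, m 0 = 0) (hk0 : ∀ m ∈ k.support, m 0 = 0)
    (hF : F = X 0 * q + k) :
    (∃ W : Submodule ℂ (Fin 6 → ℂ), Module.finrank ℂ W = 3 ∧
        (![1, 0, 0, 0, 0, 0] : Fin 6 → ℂ) ∈ W ∧ ∀ w ∈ W, eval w F = 0) ↔
      (∃ U : Submodule ℂ (Fin 6 → ℂ), Module.finrank ℂ U = 2 ∧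
        (∀ u ∈ U, u 0 = 0) ∧ ∀ u ∈ U, eval u q = 0 ∧ eval u k = 0) := by
  set e₀ : Fin 6 → ℂ := ![1, 0, 0, 0, 0, 0] with he₀
  have he00 : e₀ 0 = 1 := rfl
  have he0z : ∀ i : Fin 6, i ≠ 0 → e₀ i = 0 := fun i hi => by rw [he₀]; exact e0_ne hi
  have hevalF : ∀ w : Fin 6 → ℂ, eval w F = w 0 * eval w q + eval w k := by
    intro w; simp [hF]
  constructor
  · rintro ⟨W, hW3, he, hFW⟩
    set π : W →ₗ[ℂ] ℂ := (LinearMap.proj 0).comp W.subtype with hπ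
    have hrange : LinearMap.range π = ⊤ := by
      rw [LinearMap.range_eq_top]
      intro c
      refine ⟨c • ⟨e₀, he⟩, ?_⟩
      simp [hπ, he00]
    have hker : Module.finrank ℂ (LinearMap.ker π) = 2 := by
      have h1 := LinearMap.finrank_range_add_finrank_ker π
      rw [hrange, hW3] at h1
      simp at h1
      omega
    refine ⟨(LinearMap.ker π).map W.subtype, ?_, ?_, ?_⟩
    · rw [Submodule.finrank_map_subtype_eq]; exact hker
    · rintro u hu
      obtain ⟨x, hx, rfl⟩ := hu
      simpa [hπ] using hx
    · rintro u hu
      obtain ⟨x, hx, rfl⟩ := hu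
      have hu0 : (x : Fin 6 → ℂ) 0 = 0 := by simpa [hπ] using hx
      have huW : (x : Fin 6 → ℂ) ∈ W := x.2
      have hFu := hFW _ huW
      rw [hevalF, hu0, zero_mul, zero_add] at hFu
      have hwW : e₀ + (x : Fin 6 → ℂ) ∈ W := W.add_mem he huW
      have hFw := hFW _ hwW
      rw [hevalF] at hFw
      have hagree : ∀ i, i ≠ 0 → (e₀ + (x : Fin 6 → ℂ)) i = (x : Fin 6 → ℂ) i := by
        intro i hi; simp [he0z i hi]
      rw [eval_agree hq0 hagree, eval_agree hk0 hagree, hFu, add_zero] at hFw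
      have hw0 : (e₀ + (x : Fin 6 → ℂ)) 0 = 1 := by simp [he00, hu0]
      rw [hw0, one_mul] at hFw
      exact ⟨hFw, hFu⟩
  · rintro ⟨U, hU2, hU0, hUqk⟩
    have he0ne : e₀ ≠ 0 := fun h => by simpa [he00] using congrFun h 0
    refine ⟨U ⊔ (ℂ ∙ e₀), ?_, Submodule.mem_sup_right (Submodule.mem_span_singleton_self e₀), ?_⟩
    · have hinf : U ⊓ (ℂ ∙ e₀) = ⊥ := by
        rw [Submodule.eq_bot_iff]
        rintro x ⟨hxU, hxS⟩
        obtain ⟨c, rfl⟩ := Submodule.mem_span_singleton.mp hxS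
        have := hU0 _ hxU
        simp [he00] at this
        simp [this]
      have h := Submodule.finrank_sup_add_finrank_inf_eq U (ℂ ∙ e₀)
      rw [hinf, hU2, finrank_span_singleton he0ne] at h
      simpa using h
    · intro w hw
      obtain ⟨u, huU, s, hsS, rfl⟩ := Submodule.mem_sup.mp hw
      obtain ⟨c, rfl⟩ := Submodule.mem_span_singleton.mp hsS
      have hagree : ∀ i, i ≠ 0 → (u + c • e₀) i = u i := by
        intro i hi; simp [he0z i hi]
      obtain ⟨hqu, hku⟩ := hUqk u huU
      rw [hevalF, eval_agree hq0 hagree, eval_agree hk0 hagree, hqu, hku]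
      ring
end

section
/- Assume: (i) every w ∈ ℂ⁶ at which F and all its first-order partial derivatives vanish lies on the line ℂ·e₀ (i.e., Y has no singular point other than ν); and (ii) for every nonzero v ∈ ℂ⁶ with v₀ = 0 and q(v) = k(v) = 0, the gradient of q at v is nonzero. Then for every nonzero v ∈ ℂ⁶ with v₀ = 0 and q(v) = k(v) = 0, the gradients of q and k at v (taken with respect to x₁,…,x₅) are linearly independent; in particular the surface Σ = {q = k = 0} ⊂ ℙ⁴ is nonsingular. -/
open MvPolynomial

lemma eval_eq_of_agree (p : MvPolynomial (Fin 6) ℂ) (hp : ∀ m ∈ p.support, m 0 = 0)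
    {w v : Fin 6 → ℂ} (h : ∀ i : Fin 6, i ≠ 0 → w i = v i) : eval w p = eval v p := by
  rw [eval_eq, eval_eq]
  refine Finset.sum_congr rfl fun d hd => ?_
  congr 1
  refine Finset.prod_congr rfl fun i _ => ?_
  by_cases hi : i = 0
  · subst hi; rw [hp d hd]; simp
  · rw [h i hi]

lemma pderiv_zero_of_supp (p : MvPolynomial (Fin 6) ℂ) (hp : ∀ m ∈ p.support, m 0 = 0) :
    pderiv (0 : Fin 6) p = 0 := by
  conv_lhs => rw [p.as_sum]
  rw [map_sum]
  refine Finset.sum_eq_zero fun m hm => ?_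
  rw [pderiv_monomial, hp m hm]
  simp

lemma supp_pderiv (p : MvPolynomial (Fin 6) ℂ) (hp : ∀ m ∈ p.support, m 0 = 0) (i : Fin 6) :
    ∀ m ∈ (pderiv i p).support, m 0 = 0 := by
  classical
  intro m hm
  have hrep : pderiv i p = ∑ d ∈ p.support,
      monomial (d - Finsupp.single i 1) (coeff d p * (d i : ℂ)) := by
    conv_lhs => rw [p.as_sum]
    rw [map_sum]
    refine Finset.sum_congr rfl fun d _ => ?_
    rw [pderiv_monomial]
  rw [hrep] at hm
  have := MvPolynomial.support_sum hm
  obtain ⟨d, hd, hmem⟩ := Finset.mem_biUnion.mp this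
  have hms := MvPolynomial.support_monomial_subset hmem
  rw [Finset.mem_singleton] at hms
  rw [hms, Finsupp.tsub_apply, hp d hd]
  simp

/-- if `ν` is the only singular point of `Y` and the quadric `Q` is smooth
along `Σ`, then at every point of `Σ = {q = k = 0}` the gradients of `q` and `k`
(with respect to `x₁, …, x₅`) are linearly independent, i.e. `Σ` is nonsingular. -/
theorem stmt_3 (q k F : MvPolynomial (Fin 6) ℂ)
    (hq : q.IsHomogeneous 2) (hk : k.IsHomogeneous 3)
    (hq0 : ∀ m ∈ q.support, m 0 = 0) (hk0 : ∀ m ∈ k.support, m 0 = 0)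
    (hF : F = X 0 * q + k)
    (hsing : ∀ w : Fin 6 → ℂ, eval w F = 0 → (∀ i : Fin 6, eval w (pderiv i F) = 0) →
      ∃ c : ℂ, w = c • (![1, 0, 0, 0, 0, 0] : Fin 6 → ℂ))
    (hgradq : ∀ v : Fin 6 → ℂ, v ≠ 0 → v 0 = 0 → eval v q = 0 → eval v k = 0 →
      ∃ i : Fin 6, eval v (pderiv i q) ≠ 0) :
    ∀ v : Fin 6 → ℂ, v ≠ 0 → v 0 = 0 → eval v q = 0 → eval v k = 0 →
      LinearIndependent ℂ
        ![(fun i : Fin 5 => eval v (pderiv i.succ q)),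
          (fun i : Fin 5 => eval v (pderiv i.succ k))] := by
  intro v hv hv0 hqv hkv
  rw [LinearIndependent.pair_iff]
  intro s t hst
  have hcomp : ∀ j : Fin 5,
      s * eval v (pderiv j.succ q) + t * eval v (pderiv j.succ k) = 0 := by
    intro j
    have := congrFun hst j
    simpa using this
  have pd0q : pderiv (0 : Fin 6) q = 0 := pderiv_zero_of_supp q hq0
  have pd0k : pderiv (0 : Fin 6) k = 0 := pderiv_zero_of_supp k hk0
  obtain ⟨i₀, hi₀⟩ := hgradq v hv hv0 hqv hkv
  have hi₀0 : i₀ ≠ 0 := by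
    rintro rfl
    rw [pd0q] at hi₀
    simp at hi₀
  obtain ⟨j₀, rfl⟩ : ∃ j : Fin 5, j.succ = i₀ := Fin.exists_succ_eq.mpr hi₀0
  have ht : t = 0 := by
    by_contra ht
    set w : Fin 6 → ℂ := Function.update v 0 (s / t) with hwdef
    have hw : ∀ i : Fin 6, i ≠ 0 → w i = v i := fun i hi => Function.update_of_ne hi _ _
    have hw0 : w 0 = s / t := Function.update_self _ _ _
    have hqw : eval w q = 0 := by rw [eval_eq_of_agree q hq0 hw]; exact hqv
    have hkw : eval w k = 0 := by rw [eval_eq_of_agree k hk0 hw]; exact hkv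
    have hFw : eval w F = 0 := by
      rw [hF]
      simp [hqw, hkw]
    have hpd : ∀ i : Fin 6, eval w (pderiv i F) = 0 := by
      intro i
      rw [hF, map_add, pderiv_mul]
      by_cases hi : i = 0
      · subst hi
        rw [pderiv_X_self, pd0q, pd0k]
        simp [hqw]
      · obtain ⟨j, rfl⟩ : ∃ jj : Fin 5, jj.succ = i := Fin.exists_succ_eq.mpr hi
        rw [pderiv_X_of_ne (Fin.succ_ne_zero j).symm]
        have e1 : eval w (pderiv j.succ q) = eval v (pderiv j.succ q) :=
          eval_eq_of_agree _ (supp_pderiv q hq0 _) hw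
        have e2 : eval w (pderiv j.succ k) = eval v (pderiv j.succ k) :=
          eval_eq_of_agree _ (supp_pderiv k hk0 _) hw
        have hcj := hcomp j
        simp only [map_add, map_mul, eval_X, hw0, e1, e2, zero_mul, zero_add]
        field_simp
        linear_combination hcj
    obtain ⟨c, hc⟩ := hsing w hFw hpd
    apply hv
    funext i
    by_cases hi : i = 0
    · subst hi; exact hv0
    · obtain ⟨j, rfl⟩ : ∃ jj : Fin 5, jj.succ = i := Fin.exists_succ_eq.mpr hi
      have hz : (![1, 0, 0, 0, 0, 0] : Fin 6 → ℂ) j.succ = 0 := by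
        fin_cases j <;> simp
      have := congrFun hc j.succ
      rw [hw j.succ (Fin.succ_ne_zero j)] at this
      simp [hz] at this
      simpa using this
  subst ht
  refine ⟨?_, rfl⟩
  have := hcomp j₀
  rw [zero_mul, add_zero] at this
  exact (mul_eq_zero.mp this).resolve_right hi₀
end

section
/- Let q be a homogeneous polynomial of degree 2 in the variables x₁,…,x₅ whose polar form is nondegenerate, written as q = x₁·h₁ + q₁ with h₁ a linear form and q₁ a quadratic form in the variables x₂,…,x₅ only. Then h₁ ≠ 0, and for every nonzero a ∈ ℂ⁴ with h₁(a) = 0 and q₁(a) = 0, the linear functionals h₁ and b₁(a,·) on ℂ⁴ are linearly independent, where b₁ is the polar form of q₁. (Equivalently, the plane conic {h₁ = q₁ = 0} ⊂ ℙ³ is nonsingular; these conics are the fibres of the contraction φ : Σ^[2] → F(Y) over points of Σ in the nodal case.) -/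
/-!
Write `b` for the polar form of `q`. If `h₁ = 0`, then `q = q₁` does not involve `x₁`, so `e₁`
lies in the radical of `b`. When `a₁ = 0` and `h₁(a) = 0`, one has
`b(a + c e₁, x) = (c/2) h₁(x') + b₁(a, x')` for every `x`, where `x'` is `x` with `x₁` set to `0`;
so a relation `α h₁ + β b₁(a, ·) = 0` with `β ≠ 0` puts `a + (2α/β) e₁ ≠ 0` in the radical,
while `β = 0` forces `h₁ = 0`.
-/

open MvPolynomial

namespace MvPolynomial

section Eval

variable {σ R : Type*} [CommSemiring R] {p : MvPolynomial σ R} {i : σ}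

theorem eval_eq_of_forall_ne (hp : ∀ m ∈ p.support, m i = 0) {x y : σ → R}
    (hxy : ∀ j ≠ i, x j = y j) : eval x p = eval y p :=
  eval₂_congr _ x y fun {j m} hj hm ↦ hxy j fun hji ↦
    Finsupp.mem_support_iff.mp hj (hji ▸ hp m (mem_support_iff.mpr hm))

theorem IsHomogeneous.eval_add (hp : p.IsHomogeneous 1) (x y : σ → R) :
    eval (x + y) p = eval x p + eval y p := by
  have hspan : p ∈ Submodule.span R (Set.range X) :=
    homogeneousSubmodule_one_eq_span_X (σ := σ) (R := R) ▸ hp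
  clear hp
  induction hspan using Submodule.span_induction with
  | mem _ hX => obtain ⟨j, rfl⟩ := hX; simp
  | zero => simp
  | add _ _ _ _ h₁ h₂ => simp only [map_add, h₁, h₂]; ring
  | smul _ _ _ h => simp only [smul_eval, h]; ring

theorem IsHomogeneous.eval_zero {n : ℕ} (hp : p.IsHomogeneous n) (hn : n ≠ 0) :
    eval 0 p = 0 := by
  rw [MvPolynomial.eval_zero]
  exact hp.coeff_eq_zero (by simpa using hn.symm)

end Eval

section Polar

variable {σ K : Type*} [Field K] {p h r : MvPolynomial σ K} {i : σ}

noncomputable def polar (p : MvPolynomial σ K) (v u : σ → K) : K :=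
  (eval (v + u) p - eval v p - eval u p) / 2

theorem polar_zero_left {n : ℕ} (hp : p.IsHomogeneous n) (hn : n ≠ 0) (u : σ → K) :
    polar p 0 u = 0 := by
  rw [polar, zero_add, hp.eval_zero hn, sub_zero, sub_self, zero_div]

theorem polar_add_single_left [DecidableEq σ] (hp : ∀ m ∈ p.support, m i = 0)
    (v u : σ → K) (c : K) : polar p (v + Pi.single i c) u = polar p v u := by
  have hsingle : ∀ x : σ → K, eval (x + Pi.single i c) p = eval x p := fun x ↦
    eval_eq_of_forall_ne hp fun j hj ↦ by simp [hj]
  rw [polar, add_right_comm, hsingle, hsingle, polar]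

theorem polar_update_right [DecidableEq σ] (hp : ∀ m ∈ p.support, m i = 0)
    (v u : σ → K) : polar p v (Function.update u i 0) = polar p v u := by
  have hupdate : ∀ x : σ → K, eval (x + Function.update u i 0) p = eval (x + u) p := fun x ↦
    eval_eq_of_forall_ne hp fun j hj ↦ by simp [hj]
  rw [polar, hupdate, ← zero_add (Function.update u i 0), hupdate, zero_add, polar]

theorem polar_X_mul_add (hh : h.IsHomogeneous 1) (v u : σ → K) :
    polar (X i * h + r) v u = (v i * eval u h + u i * eval v h) / 2 + polar r v u := by
  simp only [polar, map_add, map_mul, eval_X, hh.eval_add, Pi.add_apply]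
  ring

theorem polar_X_mul_add_add_single [DecidableEq σ] (hh : h.IsHomogeneous 1)
    (hh0 : ∀ m ∈ h.support, m i = 0) (hr0 : ∀ m ∈ r.support, m i = 0) {a : σ → K}
    (hai : a i = 0) (hha : eval a h = 0) (c : K) (u : σ → K) :
    polar (X i * h + r) (a + Pi.single i c) u =
      c / 2 * eval (Function.update u i 0) h + polar r a (Function.update u i 0) := by
  have hv : eval (a + Pi.single i c) h = 0 :=
    (eval_eq_of_forall_ne hh0 fun j hj ↦ by simp [hj]).trans hha
  have hu : eval u h = eval (Function.update u i 0) h :=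
    eval_eq_of_forall_ne hh0 fun j hj ↦ by simp [hj]
  rw [polar_X_mul_add hh, polar_add_single_left hr0, ← polar_update_right hr0, hv, hu]
  simp only [Pi.add_apply, hai, Pi.single_eq_same, zero_add, mul_zero, add_zero]
  ring

end Polar

theorem eq_zero_of_forall_eval_eq_zero_of_apply_eq_zero {σ K : Type*} [Field K] [Infinite K]
    [DecidableEq σ] {p : MvPolynomial σ K} {i : σ} (hp : ∀ m ∈ p.support, m i = 0)
    (hzero : ∀ x : σ → K, x i = 0 → eval x p = 0) : p = 0 :=
  MvPolynomial.funext fun x ↦ by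
    rw [map_zero, ← hzero (Function.update x i 0) (Function.update_self ..)]
    exact eval_eq_of_forall_ne hp fun j hj ↦ by simp [hj]

end MvPolynomial

theorem stmt_5_general (q h₁ q₁ : MvPolynomial (Fin 5) ℂ)
    (hqnd : ∀ v : Fin 5 → ℂ,
      (∀ u : Fin 5 → ℂ, (eval (v + u) q - eval v q - eval u q) / 2 = 0) → v = 0)
    (hh₁ : h₁.IsHomogeneous 1) (hq₁ : q₁.IsHomogeneous 2)
    (hh₁0 : ∀ m ∈ h₁.support, m 0 = 0) (hq₁0 : ∀ m ∈ q₁.support, m 0 = 0)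
    (hdec : q = X 0 * h₁ + q₁) :
    h₁ ≠ 0 ∧
    ∀ a : Fin 5 → ℂ, a ≠ 0 → a 0 = 0 → eval a h₁ = 0 → eval a q₁ = 0 →
      ∀ α β : ℂ,
        (∀ x : Fin 5 → ℂ, x 0 = 0 →
          α * eval x h₁ + β * ((eval (a + x) q₁ - eval a q₁ - eval x q₁) / 2) = 0) →
        α = 0 ∧ β = 0 := by
  have hh₁_ne : h₁ ≠ 0 := by
    rintro rfl
    have hrad : ∀ u, polar q (Pi.single 0 1) u = 0 := fun u ↦ by
      rw [hdec, polar_X_mul_add (isHomogeneous_zero _ _ 1), ← zero_add (Pi.single 0 1),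
        polar_add_single_left hq₁0, polar_zero_left hq₁ two_ne_zero]
      simp
    simpa using congrFun (hqnd _ hrad) 0
  refine ⟨hh₁_ne, fun a ha ha0 hha _ α β hab ↦ ?_⟩
  obtain rfl | hβ := eq_or_ne β 0
  · refine ⟨by_contra fun hα ↦ hh₁_ne ?_, rfl⟩
    exact eq_zero_of_forall_eval_eq_zero_of_apply_eq_zero hh₁0 fun x hx ↦ by
      simpa [hα] using hab x hx
  · have hrad : ∀ u, polar q (a + Pi.single 0 (2 * α / β)) u = 0 := fun u ↦ by
      rw [hdec, polar_X_mul_add_add_single hh₁ hh₁0 hq₁0 ha0 hha]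
      have hu := hab (Function.update u 0 0) (Function.update_self ..)
      rw [polar]
      field_simp
      linear_combination 2 * hu
    refine (ha (funext fun j ↦ ?_)).elim
    obtain rfl | hj := eq_or_ne j 0
    · exact ha0
    · simpa [hj] using congrFun (hqnd _ hrad) j

/-- for a nondegenerate quadratic form `q = x₁·h₁ + q₁` in `x₁, …, x₅`
(`h₁` linear and `q₁` quadratic in `x₂, …, x₅` only, the coordinates of `ℂ⁴` being
identified with the hyperplane `{x₁ = 0}` of `ℂ⁵`), one has `h₁ ≠ 0` and, at every
nonzero point `a` of the conic `{h₁ = q₁ = 0}`, the linear functionals `h₁` and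
`b₁(a,·)` on `ℂ⁴` are linearly independent: the conic is nonsingular. -/
theorem stmt_5 (q h₁ q₁ : MvPolynomial (Fin 5) ℂ)
    (hq : q.IsHomogeneous 2)
    (hqnd : ∀ v : Fin 5 → ℂ,
      (∀ u : Fin 5 → ℂ, (eval (v + u) q - eval v q - eval u q) / 2 = 0) → v = 0)
    (hh₁ : h₁.IsHomogeneous 1) (hq₁ : q₁.IsHomogeneous 2)
    (hh₁0 : ∀ m ∈ h₁.support, m 0 = 0) (hq₁0 : ∀ m ∈ q₁.support, m 0 = 0)
    (hdec : q = X 0 * h₁ + q₁) :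
    h₁ ≠ 0 ∧
    ∀ a : Fin 5 → ℂ, a ≠ 0 → a 0 = 0 → eval a h₁ = 0 → eval a q₁ = 0 →
      ∀ α β : ℂ,
        (∀ x : Fin 5 → ℂ, x 0 = 0 →
          α * eval x h₁ + β * ((eval (a + x) q₁ - eval a q₁ - eval x q₁) / 2) = 0) →
        α = 0 ∧ β = 0 :=
  stmt_5_general q h₁ q₁ hqnd hh₁ hq₁ hh₁0 hq₁0 hdec
end
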